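/- arXiv:1402.5157 — 2 statements merged into one kernel-verified Lean document; each statement's English description precedes it below -/
import Mathlib

section
/- Let p be a prime, n ≥ 1, and consider ℝ^{n+1} with coordinates indexed by {0,1,...,n}. For partitions λ, μ of size at most n, set λ̂ = (-|λ|, λ_1,...,λ_n) and ρ_n(δ) = (δ,-1,...,-n) for δ ∈ ℤ. Then μ̂ + ρ_n(δ) ∼_p λ̂ + ρ_n(δ) (equal up to permutation of coordinates mod p) if and only if μ̂ lies in the orbit of λ̂ under the ρ_n(δ)-shifted action of the affine reflection group generated by the reflections s_{i,j,rp}(x) = x - (⟨x, ε_i - ε_j⟩ - rp)(ε_i - ε_j) for 0 ≤ i < j ≤ n and r ∈ ℤ. -/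
/-!
The coordinate sum of `f̂ + ρ_n(δ)` is `δ - (1 + ⋯ + n)` whatever `f` is, so two such vectors
that agree modulo `p` after a permutation differ by `p` times an integer vector whose coordinate
sum is zero, i.e. by `p` times an element of the `A_n` root lattice.
-/

def IsPartWithin (n : ℕ) (f : ℕ → ℕ) : Prop :=
  (∀ i j, i ≤ j → f j ≤ f i) ∧ ∀ i, n ≤ i → f i = 0

def psize (n : ℕ) (f : ℕ → ℕ) : ℕ := ∑ i ∈ Finset.range n, f i

/-- the integral `(n+1)`-tuple `f̂ + ρ_n(δ) = (δ - |f|, f_1 - 1, …, f_n - n)`,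
coordinates indexed by `{0,1,…,n}`. -/
def hatRhoZ (n : ℕ) (δ : ℤ) (f : ℕ → ℕ) : Fin (n + 1) → ℤ :=
  fun m => if (m : ℕ) = 0 then δ - (psize n f : ℤ)
    else (f ((m : ℕ) - 1) : ℤ) - ((m : ℕ) : ℤ)

open Finset

lemma sum_hatRhoZ (n : ℕ) (δ : ℤ) (f : ℕ → ℕ) :
    ∑ m, hatRhoZ n δ f m = δ - ∑ i : Fin n, ((i : ℤ) + 1) := by
  have hsize : (psize n f : ℤ) = ∑ i : Fin n, (f i : ℤ) := by
    rw [psize, Fin.sum_univ_eq_sum_range (fun i => (f i : ℤ)) n]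
    push_cast
    rfl
  have hsucc (i : Fin n) : hatRhoZ n δ f i.succ = (f i : ℤ) - ((i : ℤ) + 1) := by
    simp [hatRhoZ, Fin.val_succ]
  rw [Fin.sum_univ_succ, sum_congr rfl fun i _ => hsucc i, sum_sub_distrib, ← hsize]
  simp only [hatRhoZ, Fin.val_zero, if_true]
  ring

lemma intCast_eq_iff_exists_sum_eq_zero {ι : Type*} [Fintype ι] (p : ℕ) {a b : ι → ℤ}
    (hsum : ∑ i, a i = ∑ i, b i) :
    (∀ i, (a i : ZMod p) = b i) ↔ ∃ t : ι → ℤ, ∑ i, t i = 0 ∧ ∀ i, a i = b i + p * t i := by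
  simp_rw [ZMod.intCast_eq_intCast_iff_dvd_sub, dvd_sub_comm]
  constructor
  · intro hdvd
    refine ⟨fun i => (a i - b i) / p, ?_, fun i => ?_⟩
    · rw [← Int.sum_div fun i _ => hdvd i, sum_sub_distrib, hsum, sub_self, Int.zero_ediv]
    · rw [Int.mul_ediv_cancel' (hdvd i)]
      ring
  · rintro ⟨t, -, ht⟩ i
    exact ⟨t i, by rw [ht i]; ring⟩

theorem sim_p_iff_affine_orbit_hat_general (p : ℕ) (n : ℕ) (δ : ℤ)
    (lam mu : ℕ → ℕ) :
    (∃ σ : Equiv.Perm (Fin (n + 1)), ∀ m,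
        ((hatRhoZ n δ mu m : ℤ) : ZMod p) = ((hatRhoZ n δ lam (σ m) : ℤ) : ZMod p)) ↔
    (∃ σ : Equiv.Perm (Fin (n + 1)), ∃ t : Fin (n + 1) → ℤ, (∑ m, t m) = 0 ∧
        ∀ m, hatRhoZ n δ mu m = hatRhoZ n δ lam (σ m) + p * t m) := by
  refine exists_congr fun σ => intCast_eq_iff_exists_sum_eq_zero p ?_
  rw [Equiv.sum_comp σ (hatRhoZ n δ lam), sum_hatRhoZ, sum_hatRhoZ]

/-- Theorem 8.9 reformulation: `μ̂ + ρ_n(δ) ∼_p λ̂ + ρ_n(δ)` (equal up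
to a permutation of the coordinates `{0,…,n}`, modulo `p`) iff `μ̂` lies in the orbit
of `λ̂` under the `ρ_n(δ)`-shifted action of the affine reflection group `Ŵ_n^p`
generated by the reflections `s_{i,j,rp}`.  An element of this group is a coordinate
permutation followed by a translation by `p` times an element of the type `A_n` root
lattice, i.e. `p` times an integer vector with coordinate sum `0`. -/
theorem sim_p_iff_affine_orbit_hat (p : ℕ) [Fact p.Prime] (n : ℕ) (hn : 1 ≤ n) (δ : ℤ)
    (lam mu : ℕ → ℕ) (hlam : IsPartWithin n lam) (hmu : IsPartWithin n mu)
    (hlsz : psize n lam ≤ n) (hmsz : psize n mu ≤ n) :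
    (∃ σ : Equiv.Perm (Fin (n + 1)), ∀ m,
        ((hatRhoZ n δ mu m : ℤ) : ZMod p) = ((hatRhoZ n δ lam (σ m) : ℤ) : ZMod p)) ↔
    (∃ σ : Equiv.Perm (Fin (n + 1)), ∃ t : Fin (n + 1) → ℤ, (∑ m, t m) = 0 ∧
        ∀ m, hatRhoZ n δ mu m = hatRhoZ n δ lam (σ m) + p * t m) :=
  sim_p_iff_affine_orbit_hat_general p n δ lam mu
end

section
/- Let δ ∈ ℤ, and let λ be a partition of size at most n whose δ-marked abacus (with n beads) has a bead, say the j-th, on the marked runner v_λ with an empty space immediately above it. Let μ be the partition obtained by moving that bead up one space (so |μ| = |λ| - p). Then there exists r ∈ ℤ and w in the symmetric group on coordinates {1,...,n} such that μ̂ = w s_{0,j} ·_{δ+rp} λ̂, i.e. μ̂ lies in the (δ+rp)-shifted orbit of λ̂ under the symmetric group on {0,1,...,n}. -/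
/-- `λ̂ = (-|λ|, λ_1, …, λ_n)`. -/
def hatP (n : ℕ) (f : ℕ → ℕ) : Fin (n + 1) → ℤ :=
  fun m => if (m : ℕ) = 0 then -(psize n f : ℤ) else (f ((m : ℕ) - 1) : ℤ)

/-- `ρ_n(δ) = (δ, -1, …, -n)`. -/
def rhoP (n : ℕ) (δ : ℤ) : Fin (n + 1) → ℤ :=
  fun m => if (m : ℕ) = 0 then δ else -((m : ℕ) : ℤ)

/-! Shifting by `ρ_n(δ')` turns `λ̂` into `(δ' - |λ|, β_1, …, β_n)`, where `β_i = λ_i - i` are the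
bead positions (offset by `-n`). Moving bead `j` up replaces `β_j` by `β_j - p` and lowers `|λ|`
by `p`. The runner condition lets us choose `δ' ≡ δ (mod p)` with `δ' - |λ| = β_j - p`; then the
zeroth coordinate and bead `j` trade values, so `s_{0,j}` followed by a permutation of
`{1, …, n}` re-sorting the beads of `μ` maps one shifted vector onto the other. -/

open Function

theorem cons_eq_cons_comp_swap_comp_decomposeFin {α : Type*} {n : ℕ} (a b : Fin n → α) (c : α)
    (k : Fin n) (τ : Equiv.Perm (Fin n)) (h : b ∘ τ = update a k c) :
    (Fin.cons (a k) b : Fin (n + 1) → α)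
      = Fin.cons c a ∘ Equiv.swap 0 k.succ ∘ Equiv.Perm.decomposeFin.symm (0, τ⁻¹) := by
  funext m
  refine Fin.cases ?_ (fun i => ?_) m
  · simp
  · obtain ⟨l, rfl⟩ := τ.surjective i
    have hw : Equiv.Perm.decomposeFin.symm (0, τ⁻¹) (τ l).succ = l.succ := by simp
    rw [comp_apply, comp_apply, hw, Fin.cons_succ, ← comp_apply (f := b), h]
    rcases eq_or_ne l k with rfl | hl
    · simp
    · rw [Equiv.swap_apply_of_ne_of_ne l.succ_ne_zero (Fin.succ_injective _ |>.ne hl)]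
      simp [hl]

def betaNumbers (n : ℕ) (f : ℕ → ℕ) : Fin n → ℤ := fun i => f i - ((i : ℕ) + 1)

theorem psize_eq_sum_fin (n : ℕ) (f : ℕ → ℕ) : (psize n f : ℤ) = ∑ i : Fin n, (f i : ℤ) := by
  rw [psize, Nat.cast_sum, Fin.sum_univ_eq_sum_range (fun i => (f i : ℤ))]

theorem sum_betaNumbers (n : ℕ) (f : ℕ → ℕ) :
    ∑ i, betaNumbers n f i = psize n f - ∑ i : Fin n, ((i : ℕ) + 1 : ℤ) := by
  simp [betaNumbers, Finset.sum_sub_distrib, psize_eq_sum_fin]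

theorem psize_eq_sub_of_betaNumbers_comp_eq_update {n : ℕ} {lam mu : ℕ → ℕ} {p : ℤ} {k : Fin n}
    {τ : Equiv.Perm (Fin n)}
    (h : betaNumbers n mu ∘ τ = update (betaNumbers n lam) k (betaNumbers n lam k - p)) :
    (psize n mu : ℤ) = psize n lam - p := by
  have hsum : ∑ i, betaNumbers n mu i = ∑ i, betaNumbers n lam i - p := by
    rw [← Equiv.sum_comp τ, Finset.sum_eq_add_sum_sdiff_singleton_of_mem (Finset.mem_univ k)]
    simpa [Finset.sum_update_of_mem (Finset.mem_univ k), add_sub_right_comm]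
      using congrArg (fun g => ∑ i, g i) h
  rw [sum_betaNumbers, sum_betaNumbers] at hsum
  linarith

theorem hatP_add_rhoP (n : ℕ) (f : ℕ → ℕ) (δ : ℤ) :
    hatP n f + rhoP n δ = Fin.cons (δ - psize n f) (betaNumbers n f) := by
  funext m
  refine Fin.cases ?_ (fun i => ?_) m
  · simp [hatP, rhoP]; ring
  · simp [hatP, rhoP, betaNumbers]; ring

/-- Case A of Proposition 8.6: suppose the `δ`-marked abacus of `λ`
with `n` beads (bead `j` at position `λ_j - j + n`, marked runner
`v_λ ≡ δ - |λ| + n mod p`) has bead `j` on the marked runner with the space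
immediately above it empty, and let `μ` be the partition obtained by moving bead `j`
up one space (its bead positions are those of `λ` with `λ_j - j + n` replaced by
`λ_j - j + n - p`; in particular `|μ| = |λ| - p`).  Then there are `r ∈ ℤ` and a
permutation `w` of `{0,…,n}` fixing `0` (i.e. `w ∈ W_n`, the symmetric group on
`{1,…,n}`) with `μ̂ = w s_{0,j} ·_{δ+rp} λ̂`, where `w' ·_δ x = w'(x + ρ_n(δ)) - ρ_n(δ)`. -/
theorem bead_up_is_reflection (p : ℕ) (δ : ℤ) (n : ℕ)
    (lam mu : ℕ → ℕ)
    (j : ℕ) (hj1 : 1 ≤ j) (hjn : j ≤ n)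
    -- bead `j` lies on the marked runner `v_λ`:
    (hrunner : (((lam (j - 1) : ℤ) - j : ℤ) : ZMod p) = ((δ - (psize n lam : ℤ) : ℤ) : ZMod p))
    -- `μ` is obtained from `λ` by moving bead `j` up one space:
    (hmove : ∃ τ : Equiv.Perm (Fin n), ∀ m : Fin n,
      (mu ((τ m : Fin n) : ℕ) : ℤ) - (((τ m : Fin n) : ℕ) + 1)
        = if (m : ℕ) = j - 1 then (lam (j - 1) : ℤ) - j - p
          else (lam (m : ℕ) : ℤ) - ((m : ℕ) + 1)) :
    ∃ r : ℤ, ∃ w : Equiv.Perm (Fin (n + 1)), w 0 = 0 ∧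
      ∀ m : Fin (n + 1),
        hatP n mu m + rhoP n (δ + r * p) m
          = (hatP n lam + rhoP n (δ + r * p))
              (Equiv.swap (0 : Fin (n + 1)) ⟨j, by omega⟩ (w m)) := by
  obtain ⟨τ, hτ⟩ := hmove
  set k : Fin n := ⟨j - 1, by omega⟩
  have hβk : betaNumbers n lam k = lam (j - 1) - j := by simp [betaNumbers, k]; omega
  have hβ : betaNumbers n mu ∘ τ = update (betaNumbers n lam) k (betaNumbers n lam k - p) := by
    funext m
    rw [comp_apply, betaNumbers, hτ m, update_apply, hβk]
    exact if_congr (Fin.ext_iff (a := m) (b := k)).symm rfl rfl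
  obtain ⟨c, hc⟩ := (ZMod.intCast_eq_intCast_iff_dvd_sub _ _ _).mp hrunner
  have hsize := psize_eq_sub_of_betaNumbers_comp_eq_update hβ
  have hj : (⟨j, by omega⟩ : Fin (n + 1)) = k.succ := Fin.ext (by simp [k]; omega)
  refine ⟨-c - 1, Equiv.Perm.decomposeFin.symm (0, τ⁻¹), by simp, fun m => ?_⟩
  rw [← Pi.add_apply, hatP_add_rhoP, hatP_add_rhoP, hj,
    show δ + (-c - 1) * p - psize n mu = betaNumbers n lam k by linarith,
    show δ + (-c - 1) * p - psize n lam = betaNumbers n lam k - p by linarith]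
  exact congrFun (cons_eq_cons_comp_swap_comp_decomposeFin _ _ _ k τ hβ) m
end
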